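/- arXiv:0910.2886 — 2 statements merged into one kernel-verified Lean document; each statement's English description precedes it below -/
import Mathlib

section
/- Let μ > 0 be a real number with μ ≠ n²π² for every positive integer n. Then for every ω ∈ C₀ there exists a unique X ∈ C¹₀ satisfying X'(t) + μ ∫₀ᵗ X(s) ds = X'(0) + ω(t) for all t ∈ [0,1]. -/
open MeasureTheory

/-- `X ∈ C¹₀` (with derivative `X'`) solves the linear integral equation
`X'(t) + μ ∫₀ᵗ X(s) ds = X'(0) + ω(t)` on `[0,1]`. -/
def SolLin (μ : ℝ) (ω : ℝ → ℝ) (X X' : ℝ → ℝ) : Prop :=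
  (∀ t ∈ Set.Icc (0:ℝ) 1, HasDerivWithinAt X (X' t) (Set.Icc 0 1) t) ∧
  ContinuousOn X' (Set.Icc 0 1) ∧ X 0 = 0 ∧ X 1 = 0 ∧
  ∀ t ∈ Set.Icc (0:ℝ) 1,
    X' t + μ * ∫ s in (0:ℝ)..t, X s = X' 0 + ω t


open Real Set intervalIntegral

/-!
With `k = √μ`, the hypothesis on `μ` says exactly that `sin k ≠ 0`. The difference `D` of two
solutions satisfies `D'' = -k² D` with `D 0 = D 1 = 0`; conservation of its Wronskians with
`cos (k t)` and `sin (k t)` gives `k D t = D' 0 sin (k t)`, and `sin k ≠ 0` forces `D = 0`.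
For existence, variation of constants `X t = ∫₀ᵗ cos (k (t - s)) ω s ds` solves the equation
with `X 0 = 0`, and adding a multiple of `sin (k t)` (possible since `sin k ≠ 0`) makes `X 1 = 0`.
-/

lemma sin_sqrt_ne_zero {μ : ℝ} (hμ : 0 < μ)
    (hne : ∀ n : ℕ, 0 < n → μ ≠ (n : ℝ) ^ 2 * π ^ 2) : sin √μ ≠ 0 := by
  intro h
  obtain ⟨n, hn⟩ := sin_eq_zero_iff.1 h
  have hn_pos : 0 < n := by
    have : (0 : ℝ) < n * π := hn ▸ sqrt_pos.2 hμ
    exact_mod_cast pos_of_mul_pos_left this pi_pos.le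
  refine hne n.toNat (by omega) ?_
  rw [← sq_sqrt hμ.le, ← hn, ← Int.cast_natCast, Int.toNat_of_nonneg hn_pos.le]
  ring

lemma hasDerivAt_sin_mul (k t : ℝ) : HasDerivAt (fun s => sin (k * s)) (k * cos (k * t)) t := by
  simpa [mul_comm] using ((hasDerivAt_id t).const_mul k).sin

lemma hasDerivAt_cos_mul (k t : ℝ) :
    HasDerivAt (fun s => cos (k * s)) (-(k * sin (k * t))) t := by
  simpa [mul_comm] using ((hasDerivAt_id t).const_mul k).cos

lemma integral_sin_mul {k : ℝ} (hk : k ≠ 0) (t : ℝ) :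
    ∫ s in 0..t, sin (k * s) = (1 - cos (k * t)) / k := by
  rw [integral_comp_mul_left (fun s => sin s) hk, integral_sin]
  simp [div_eq_inv_mul]

lemma hasDerivWithinAt_integral_Icc {f : ℝ → ℝ} {a b t : ℝ} (hf : ContinuousOn f (Icc a b))
    (ht : t ∈ Icc a b) : HasDerivWithinAt (fun u => ∫ s in a..u, f s) (f t) (Icc a b) t := by
  have : Fact (t ∈ Icc a b) := ⟨ht⟩
  refine integral_hasDerivWithinAt_right ((hf.mono ?_).intervalIntegrable)
    (hf.stronglyMeasurableAtFilter_nhdsWithin measurableSet_Icc t) (hf t ht)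
  rw [uIcc_of_le ht.1]
  exact Icc_subset_Icc_right ht.2

lemma eq_of_hasDerivWithinAt_zero {E : Type*} [NormedAddCommGroup E] [NormedSpace ℝ E]
    {f : ℝ → E} {a b : ℝ} (hf : ∀ x ∈ Icc a b, HasDerivWithinAt f 0 (Icc a b) x) :
    ∀ x ∈ Icc a b, f x = f a :=
  constant_of_derivWithin_zero (fun x hx => (hf x hx).differentiableWithinAt) fun x hx =>
    (hf x (Ico_subset_Icc_self hx)).derivWithin
      (uniqueDiffOn_Icc (hx.1.trans_lt hx.2) x (Ico_subset_Icc_self hx))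

lemma mul_eq_of_hasDerivWithinAt_harmonic {k b : ℝ} {D D' : ℝ → ℝ}
    (hD : ∀ t ∈ Icc 0 b, HasDerivWithinAt D (D' t) (Icc 0 b) t)
    (hD' : ∀ t ∈ Icc 0 b, HasDerivWithinAt D' (-k ^ 2 * D t) (Icc 0 b) t) :
    ∀ t ∈ Icc 0 b, k * D t = k * D 0 * cos (k * t) + D' 0 * sin (k * t) := by
  have hF := eq_of_hasDerivWithinAt_zero
    (f := fun t => k * D t * cos (k * t) - D' t * sin (k * t)) fun t ht => by
      refine ((((hD t ht).const_mul k).mul (hasDerivAt_cos_mul k t).hasDerivWithinAt).sub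
        ((hD' t ht).mul (hasDerivAt_sin_mul k t).hasDerivWithinAt)).congr_deriv ?_
      ring
  have hG := eq_of_hasDerivWithinAt_zero
    (f := fun t => k * D t * sin (k * t) + D' t * cos (k * t)) fun t ht => by
      refine ((((hD t ht).const_mul k).mul (hasDerivAt_sin_mul k t).hasDerivWithinAt).add
        ((hD' t ht).mul (hasDerivAt_cos_mul k t).hasDerivWithinAt)).congr_deriv ?_
      ring
  intro t ht
  have hFt := hF t ht
  have hGt := hG t ht
  simp only [mul_zero, cos_zero, sin_zero, mul_one] at hFt hGt
  linear_combination cos (k * t) * hFt + sin (k * t) * hGt - k * D t * sin_sq_add_cos_sq (k * t)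

section Duhamel

variable (k : ℝ) (f : ℝ → ℝ)

/-- `∫₀ᵗ cos (k (t - s)) f s ds`, expanded by the addition formula so that `t` appears only
outside the integrals and as their upper limit. -/
noncomputable def duhamelCos (t : ℝ) : ℝ :=
  cos (k * t) * (∫ s in 0..t, cos (k * s) * f s) + sin (k * t) * ∫ s in 0..t, sin (k * s) * f s

/-- `∫₀ᵗ sin (k (t - s)) f s ds`, expanded as in `duhamelCos`. -/
noncomputable def duhamelSin (t : ℝ) : ℝ :=
  sin (k * t) * (∫ s in 0..t, cos (k * s) * f s) - cos (k * t) * ∫ s in 0..t, sin (k * s) * f s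

variable {k f}

@[simp] lemma duhamelCos_zero : duhamelCos k f 0 = 0 := by simp [duhamelCos]

@[simp] lemma duhamelSin_zero : duhamelSin k f 0 = 0 := by simp [duhamelSin]

lemma hasDerivAt_duhamelCos (hf : Continuous f) (t : ℝ) :
    HasDerivAt (duhamelCos k f) (f t - k * duhamelSin k f t) t := by
  have hA := ((by fun_prop : Continuous fun s => cos (k * s) * f s).integral_hasStrictDerivAt
    0 t).hasDerivAt
  have hB := ((by fun_prop : Continuous fun s => sin (k * s) * f s).integral_hasStrictDerivAt
    0 t).hasDerivAt
  refine (((hasDerivAt_cos_mul k t).mul hA).add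
    ((hasDerivAt_sin_mul k t).mul hB)).congr_deriv ?_
  simp only [duhamelSin]
  linear_combination f t * sin_sq_add_cos_sq (k * t)

lemma hasDerivAt_duhamelSin (hf : Continuous f) (t : ℝ) :
    HasDerivAt (duhamelSin k f) (k * duhamelCos k f t) t := by
  have hA := ((by fun_prop : Continuous fun s => cos (k * s) * f s).integral_hasStrictDerivAt
    0 t).hasDerivAt
  have hB := ((by fun_prop : Continuous fun s => sin (k * s) * f s).integral_hasStrictDerivAt
    0 t).hasDerivAt
  refine (((hasDerivAt_sin_mul k t).mul hA).sub
    ((hasDerivAt_cos_mul k t).mul hB)).congr_deriv ?_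
  simp only [duhamelCos]
  ring

lemma continuous_duhamelCos (hf : Continuous f) : Continuous (duhamelCos k f) :=
  continuous_iff_continuousAt.2 fun t => (hasDerivAt_duhamelCos hf t).continuousAt

lemma continuous_duhamelSin (hf : Continuous f) : Continuous (duhamelSin k f) :=
  continuous_iff_continuousAt.2 fun t => (hasDerivAt_duhamelSin hf t).continuousAt

lemma integral_duhamelCos (hf : Continuous f) (hk : k ≠ 0) (t : ℝ) :
    ∫ s in 0..t, duhamelCos k f s = duhamelSin k f t / k := by
  rw [integral_eq_sub_of_hasDerivAt (f := fun s => duhamelSin k f s / k)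
    (fun s _ => (hasDerivAt_duhamelSin hf s).div_const k |>.congr_deriv (by field_simp))
    ((continuous_duhamelCos hf).intervalIntegrable 0 t)]
  simp

end Duhamel

namespace SolLin

variable {μ : ℝ} {ω X X' : ℝ → ℝ}

lemma continuousOn (h : SolLin μ ω X X') : ContinuousOn X (Icc 0 1) :=
  fun t ht => (h.1 t ht).continuousWithinAt

lemma congr_forcing {g : ℝ → ℝ} (h : SolLin μ g X X') (hgω : EqOn g ω (Icc 0 1)) :
    SolLin μ ω X X' := by
  obtain ⟨hX, hX'c, hX0, hX1, heq⟩ := h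
  exact ⟨hX, hX'c, hX0, hX1, fun t ht => hgω ht ▸ heq t ht⟩

lemma sub {Z Z' : ℝ → ℝ} (hX : SolLin μ ω X X') (hZ : SolLin μ ω Z Z') :
    SolLin μ 0 (X - Z) (X' - Z') := by
  refine ⟨fun t ht => (hX.1 t ht).sub (hZ.1 t ht), hX.2.1.sub hZ.2.1,
    by simp [hX.2.2.1, hZ.2.2.1], by simp [hX.2.2.2.1, hZ.2.2.2.1], fun t ht => ?_⟩
  have hsub : uIcc 0 t ⊆ Icc 0 1 := by
    rw [uIcc_of_le ht.1]
    exact Icc_subset_Icc_right ht.2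
  have hX_eq := hX.2.2.2.2 t ht
  have hZ_eq := hZ.2.2.2.2 t ht
  simp only [Pi.sub_apply, Pi.zero_apply]
  rw [integral_sub (hX.continuousOn.mono hsub).intervalIntegrable
    (hZ.continuousOn.mono hsub).intervalIntegrable]
  linear_combination hX_eq - hZ_eq

lemma hasDerivWithinAt_deriv {D D' : ℝ → ℝ} (h : SolLin μ 0 D D') :
    ∀ t ∈ Icc 0 1, HasDerivWithinAt D' (-μ * D t) (Icc 0 1) t := by
  intro t ht
  have hD' : ∀ u ∈ Icc (0 : ℝ) 1, D' u = D' 0 - μ * ∫ s in 0..u, D s := fun u hu =>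
    eq_sub_of_add_eq (by simpa using h.2.2.2.2 u hu)
  refine (((hasDerivWithinAt_integral_Icc h.continuousOn ht).const_mul μ).const_sub (D' 0)
    |>.congr_of_mem hD' ht).congr_deriv ?_
  ring

lemma eqOn_zero {k : ℝ} (hk : k ≠ 0) (hsin : sin k ≠ 0) {D D' : ℝ → ℝ}
    (h : SolLin (k ^ 2) 0 D D') : EqOn D 0 (Icc 0 1) := by
  have hD := mul_eq_of_hasDerivWithinAt_harmonic h.1 h.hasDerivWithinAt_deriv
  have hD'0 : D' 0 = 0 := by
    have h1 := hD 1 (right_mem_Icc.2 zero_le_one)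
    simp only [h.2.2.1, h.2.2.2.1, mul_zero, zero_mul, zero_add, mul_one] at h1
    exact (mul_eq_zero.1 h1.symm).resolve_right hsin
  intro t ht
  simpa [h.2.2.1, hD'0, hk] using hD t ht

end SolLin

lemma exists_solLin {k : ℝ} (hk : k ≠ 0) (hsin : sin k ≠ 0) {g : ℝ → ℝ} (hg : Continuous g)
    (hg0 : g 0 = 0) : ∃ X X' : ℝ → ℝ, SolLin (k ^ 2) g X X' := by
  set c := -duhamelCos k g 1 / sin k
  set X := fun t => duhamelCos k g t + c * sin (k * t)
  set X' := fun t => g t - k * duhamelSin k g t + c * (k * cos (k * t))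
  have hX : ∀ t, HasDerivAt X (X' t) t := fun t =>
    (hasDerivAt_duhamelCos hg t).add ((hasDerivAt_sin_mul k t).const_mul c)
  have hX_int : ∀ t, ∫ s in 0..t, X s = duhamelSin k g t / k + c * ((1 - cos (k * t)) / k) := by
    intro t
    rw [integral_add ((continuous_duhamelCos hg).intervalIntegrable 0 t)
      ((by fun_prop : Continuous fun s => c * sin (k * s)).intervalIntegrable 0 t),
      intervalIntegral.integral_const_mul, integral_duhamelCos hg hk, integral_sin_mul hk]
  refine ⟨X, X', fun t _ => (hX t).hasDerivWithinAt, ?_, by simp [X], ?_, fun t _ => ?_⟩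
  · exact ((hg.sub (continuous_const.mul (continuous_duhamelSin hg))).add
      (by fun_prop)).continuousOn
  · simp only [X, c, mul_one]
    field_simp
    ring
  · simp only [hX_int, X', hg0, duhamelSin_zero, mul_zero, cos_zero]
    field_simp
    ring

/-- existence and uniqueness for the linear problem when
`μ ≠ n²π²` for every positive integer `n`. -/
theorem stmt5 (μ : ℝ) (hμ : 0 < μ)
    (hne : ∀ n : ℕ, 0 < n → μ ≠ (n : ℝ) ^ 2 * Real.pi ^ 2)
    (ω : ℝ → ℝ) (hω : ContinuousOn ω (Set.Icc 0 1)) (hω0 : ω 0 = 0) :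
    (∃ X X' : ℝ → ℝ, SolLin μ ω X X') ∧
    (∀ X X' Z Z' : ℝ → ℝ, SolLin μ ω X X' → SolLin μ ω Z Z' →
      Set.EqOn X Z (Set.Icc 0 1)) := by
  have hk : √μ ≠ 0 := (sqrt_pos.2 hμ).ne'
  have hsin := sin_sqrt_ne_zero hμ hne
  rw [← sq_sqrt hμ.le]
  constructor
  · set g := IccExtend zero_le_one ((Icc 0 1).domRestrict ω)
    have hgω : EqOn g ω (Icc 0 1) := fun t ht => IccExtend_of_mem _ _ ht
    obtain ⟨X, X', hX⟩ := exists_solLin (g := g) hk hsin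
      (continuous_IccExtend_iff.2 hω.domRestrict) (by rw [hgω (left_mem_Icc.2 zero_le_one), hω0])
    exact ⟨X, X', hX.congr_forcing hgω⟩
  · intro X X' Z Z' hX hZ t ht
    exact sub_eq_zero.1 ((hX.sub hZ).eqOn_zero hk hsin ht)
end

section
/- Assume f : [0,1]×ℝ²→ℝ is continuous and bounded and its first and second partial derivatives f_x, f_y, f_xx, f_xy, f_yy with respect to the second and third variables exist and are continuous and bounded. Fix ω ∈ C₀, and set a(t) = f_x(t, Y_t(ω), Y'_t(ω)) and b(t) = f_y(t, Y_t(ω), Y'_t(ω)). Then the bounded linear operator DT(ω) : C₀ → C₀ defined by DT(ω)[θ](t) = θ(t) + ∫₀ᵗ ( a(s)·Y_s(θ) + b(s)·Y'_s(θ) ) ds is a Banach space isomorphism of C₀ if and only if the only twice continuously differentiable function u on [0,1] satisfying u''(t) + b(t)u'(t) + a(t)u(t) = 0 for all t ∈ [0,1] and u(0) = u(1) = 0 is the zero function. -/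
open MeasureTheory

/-- Projection of `ℝ` onto `[0,1]`. -/
noncomputable def pr01 (s : ℝ) : Set.Icc (0:ℝ) 1 := Set.projIcc 0 1 zero_le_one s

/-- `Y_t(ω) = -t ∫₀¹ ω(s) ds + ∫₀ᵗ ω(s) ds` for a continuous map `ω` on `[0,1]`. -/
noncomputable def Yc (ω : C(Set.Icc (0:ℝ) 1, ℝ)) (t : ℝ) : ℝ :=
  -t * (∫ s in (0:ℝ)..1, ω (pr01 s)) + ∫ s in (0:ℝ)..t, ω (pr01 s)

/-- `Y'_t(ω) = -∫₀¹ ω(s) ds + ω(t)`. -/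
noncomputable def Yc' (ω : C(Set.Icc (0:ℝ) 1, ℝ)) (t : ℝ) : ℝ :=
  -(∫ s in (0:ℝ)..1, ω (pr01 s)) + ω (pr01 t)

/-- The Banach space `C₀` of continuous functions on `[0,1]` vanishing at `0`,
as a subspace of `C([0,1],ℝ)` with the supremum norm. -/
def C0 : Submodule ℝ C(Set.Icc (0:ℝ) 1, ℝ) where
  carrier := {ω | ω ⟨0, by norm_num⟩ = 0}
  add_mem' := by
    intro a b ha hb
    simp only [Set.mem_setOf_eq, ContinuousMap.add_apply] at *
    rw [ha, hb]; ring
  zero_mem' := by simp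
  smul_mem' := by
    intro c a ha
    simp only [Set.mem_setOf_eq, ContinuousMap.smul_apply, smul_eq_mul] at *
    rw [ha]; ring

/-- `g : [0,1]×ℝ²→ℝ` is continuous and bounded. -/
def ContBdd3 (g : ℝ → ℝ → ℝ → ℝ) : Prop :=
  ContinuousOn (fun p : ℝ × ℝ × ℝ => g p.1 p.2.1 p.2.2)
    (Set.Icc 0 1 ×ˢ (Set.univ : Set (ℝ × ℝ))) ∧
  ∃ C : ℝ, ∀ t ∈ Set.Icc (0:ℝ) 1, ∀ x y : ℝ, |g t x y| ≤ C


/-!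
Put `u = Y(θ)`, so that `u' = Y'(θ)`, `u 0 = u 1 = 0` and `θ = u' - u' 0`. In these terms
`DT(ω)[θ] = g` reads `u' - u' 0 + ∫₀ᵗ (a u + b u') = g`, the integrated form of
`u'' + b u' + a u = g'` with Dirichlet boundary conditions; in particular the kernel of `DT(ω)`
is the solution space of the homogeneous boundary value problem.

Surjectivity is proved by shooting. The initial value problem for the first-order system in
`(u, u')` is a linear Volterra equation, solvable on `[0,1]` because the `n`-th iterate of its
Picard map is `(K t)ⁿ / n!`-Lipschitz, hence a contraction for large `n`. By uniqueness, the
homogeneous solution with `u 0 = 0`, `u' 0 = 1` does not vanish at `1`, so adding a multiple of it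
to a particular solution achieves `u 1 = 0`. The inverse is bounded by the open mapping theorem.
-/

open Set intervalIntegral
open scoped Nat

local notation "I" => Icc (0:ℝ) 1

lemma continuous_pr01 : Continuous pr01 := continuous_projIcc (h := zero_le_one)

lemma pr01_of_mem {t : ℝ} (ht : t ∈ I) : pr01 t = ⟨t, ht⟩ := projIcc_of_mem _ ht

lemma uIcc_zero_subset {t : ℝ} (ht : t ∈ I) : uIcc 0 t ⊆ I := by
  rw [uIcc_of_le ht.1]; exact Icc_subset_Icc_right ht.2

lemma ContinuousOn.intervalIntegrable_zero_of_mem {E : Type*} [NormedAddCommGroup E] {f : ℝ → E}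
    (hf : ContinuousOn f I) {t : ℝ} (ht : t ∈ I) : IntervalIntegrable f volume 0 t :=
  (hf.mono (uIcc_zero_subset ht)).intervalIntegrable

section Calculus

variable {E : Type*} [NormedAddCommGroup E] [NormedSpace ℝ E] [CompleteSpace E]

lemma ContinuousOn.hasDerivWithinAt_integral {f : ℝ → E} (hf : ContinuousOn f I) {t : ℝ}
    (ht : t ∈ I) : HasDerivWithinAt (fun u => ∫ s in (0:ℝ)..u, f s) (f t) I t := by
  have : Fact (t ∈ I) := ⟨ht⟩
  exact integral_hasDerivWithinAt_right (hf.intervalIntegrable_zero_of_mem ht)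
    (hf.stronglyMeasurableAtFilter_nhdsWithin measurableSet_Icc t) (hf t ht)

lemma hasDerivWithinAt_of_eq_const_add_integral {F f : ℝ → E} {c : E} (hf : ContinuousOn f I)
    (hF : ∀ t ∈ I, F t = c + ∫ s in (0:ℝ)..t, f s) {t : ℝ} (ht : t ∈ I) :
    HasDerivWithinAt F (f t) I t :=
  ((hf.hasDerivWithinAt_integral ht).const_add c).congr hF (hF t ht)

lemma integral_eq_sub_of_hasDerivWithinAt_Icc {F f : ℝ → E}
    (hF : ∀ t ∈ I, HasDerivWithinAt F (f t) I t) (hf : ContinuousOn f I) {t : ℝ} (ht : t ∈ I) :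
    ∫ s in (0:ℝ)..t, f s = F t - F 0 := by
  have hsub : Icc 0 t ⊆ I := Icc_subset_Icc_right ht.2
  refine integral_eq_sub_of_hasDeriv_right_of_le ht.1
    (fun s hs => (hF s (hsub hs)).continuousWithinAt.mono hsub) (fun s hs => ?_)
    (hf.intervalIntegrable_zero_of_mem ht)
  exact ((hF s (hsub (Ioo_subset_Icc_self hs))).hasDerivAt
    (Icc_mem_nhds hs.1 (hs.2.trans_le ht.2))).hasDerivWithinAt

end Calculus

section Volterra

variable {E : Type*} [NormedAddCommGroup E] [NormedSpace ℝ E] (M : ℝ → E →L[ℝ] E)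

lemma continuousOn_clm_apply_comp_pr01 (hM : ContinuousOn M I) (p : C(I, E)) :
    ContinuousOn (fun s => M s (p (pr01 s))) I :=
  hM.clm_apply (p.continuous.comp continuous_pr01).continuousOn

section Picard

variable (x₀ : C(I, E))

noncomputable def volterra (hM : ContinuousOn M I) (p : C(I, E)) : C(I, E) where
  toFun t := x₀ t + ∫ s in (0:ℝ)..t, M s (p (pr01 s))
  continuous_toFun := x₀.continuous.add <|
    ((continuousOn_primitive_interval' ((continuousOn_clm_apply_comp_pr01 M hM p).mono
      (by rw [uIcc_of_le zero_le_one])).intervalIntegrable left_mem_uIcc).comp_continuous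
      continuous_subtype_val (fun t => by rw [uIcc_of_le zero_le_one]; exact t.2))

lemma norm_iterate_volterra_sub_le (hM : ContinuousOn M I) {K : ℝ} (hK : ∀ s ∈ I, ‖M s‖ ≤ K)
    (p q : C(I, E)) (n : ℕ) (t : I) :
    ‖(volterra M x₀ hM)^[n] p t - (volterra M x₀ hM)^[n] q t‖
      ≤ (K * t) ^ n / n ! * dist p q := by
  have hK0 : 0 ≤ K := (norm_nonneg _).trans (hK 0 (by simp))
  induction n generalizing t with
  | zero => simpa [← dist_eq_norm] using ContinuousMap.dist_apply_le_dist t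
  | succ n ih =>
    set P := (volterra M x₀ hM)^[n] p
    set Q := (volterra M x₀ hM)^[n] q
    have hint := fun r : C(I, E) =>
      (continuousOn_clm_apply_comp_pr01 M hM r).intervalIntegrable_zero_of_mem t.2
    have hdiff : (volterra M x₀ hM)^[n + 1] p t - (volterra M x₀ hM)^[n + 1] q t
        = ∫ s in (0:ℝ)..t, M s (P (pr01 s) - Q (pr01 s)) := by
      simp only [Function.iterate_succ_apply', volterra, ContinuousMap.coe_mk, map_sub]
      rw [integral_sub (hint P) (hint Q)]
      abel
    have hbound : ∀ s ∈ Ioc (0:ℝ) t, ‖M s (P (pr01 s) - Q (pr01 s))‖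
        ≤ K ^ (n + 1) / n ! * dist p q * s ^ n := by
      intro s hs
      have hsI : s ∈ I := ⟨hs.1.le, hs.2.trans t.2.2⟩
      calc ‖M s (P (pr01 s) - Q (pr01 s))‖ ≤ K * ((K * s) ^ n / n ! * dist p q) :=
            (M s).le_of_opNorm_le (hK s hsI) _ |>.trans <| by
              gcongr; simpa [pr01_of_mem hsI] using ih ⟨s, hsI⟩
        _ = K ^ (n + 1) / n ! * dist p q * s ^ n := by ring
    rw [hdiff]
    refine (norm_integral_le_of_norm_le t.2.1 (ae_of_all _ hbound)
      (Continuous.intervalIntegrable (by fun_prop) _ _)).trans_eq ?_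
    rw [intervalIntegral.integral_const_mul, integral_pow, Nat.factorial_succ]
    push_cast
    field_simp
    ring

lemma exists_fixedPoint_volterra [CompleteSpace E] (hM : ContinuousOn M I) :
    ∃ p, volterra M x₀ hM p = p := by
  obtain ⟨K, hK⟩ := isCompact_Icc.exists_bound_of_continuousOn hM
  have hK0 : 0 ≤ K := (norm_nonneg _).trans (hK 0 (by simp))
  obtain ⟨n, hn⟩ := (FloorSemiring.tendsto_pow_div_factorial_atTop K).eventually
    (gt_mem_nhds zero_lt_one) |>.exists
  have hlip : ∀ p q, dist ((volterra M x₀ hM)^[n] p) ((volterra M x₀ hM)^[n] q)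
      ≤ K ^ n / n ! * dist p q := fun p q =>
    (ContinuousMap.dist_le (by positivity)).2 fun t => by
      rw [dist_eq_norm]
      refine (norm_iterate_volterra_sub_le M x₀ hM hK p q n t).trans ?_
      gcongr
      · exact mul_nonneg hK0 t.2.1
      · exact mul_le_of_le_one_right hK0 t.2.2
  have hcontr : ContractingWith ⟨K ^ n / n !, by positivity⟩ (volterra M x₀ hM)^[n] :=
    ⟨by exact_mod_cast hn, LipschitzWith.of_dist_le_mul hlip⟩
  exact ⟨_, hcontr.isFixedPt_fixedPoint_iterate⟩

end Picard

def IsVolterraSolution (x₀ x : ℝ → E) : Prop :=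
  ContinuousOn x I ∧ ∀ t ∈ I, x t = x₀ t + ∫ s in (0:ℝ)..t, M s (x s)

lemma exists_isVolterraSolution [CompleteSpace E] (hM : ContinuousOn M I) {x₀ : ℝ → E}
    (hx₀ : ContinuousOn x₀ I) : ∃ x, IsVolterraSolution M x₀ x := by
  obtain ⟨p, hp⟩ :=
    exists_fixedPoint_volterra M ⟨fun t : I => x₀ t, hx₀.domRestrict⟩ hM
  refine ⟨fun t => p (pr01 t), (p.continuous.comp continuous_pr01).continuousOn, fun t ht => ?_⟩
  conv_lhs => rw [← hp]
  simp only [volterra, ContinuousMap.coe_mk, pr01_of_mem ht]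
  rfl

lemma IsVolterraSolution.add_smul (hM : ContinuousOn M I) {x₀ y₀ x y : ℝ → E}
    (hx : IsVolterraSolution M x₀ x) (hy : IsVolterraSolution M y₀ y) (c : ℝ) :
    IsVolterraSolution M (x₀ + c • y₀) (x + c • y) := by
  refine ⟨hx.1.add (hy.1.const_smul c), fun t ht => ?_⟩
  have hix := (hM.clm_apply hx.1).intervalIntegrable_zero_of_mem ht
  have hiy : IntervalIntegrable (fun s => c • M s (y s)) volume 0 t :=
    ((hM.clm_apply hy.1).intervalIntegrable_zero_of_mem ht).smul c
  simp only [Pi.add_apply, Pi.smul_apply, map_add, map_smul]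
  rw [integral_add hix hiy, intervalIntegral.integral_smul, hx.2 t ht, hy.2 t ht, smul_add]
  abel

lemma IsVolterraSolution.hasDerivWithinAt [CompleteSpace E] (hM : ContinuousOn M I) {c : E}
    {x : ℝ → E} (hx : IsVolterraSolution M (fun _ => c) x) {t : ℝ} (ht : t ∈ I) :
    HasDerivWithinAt x (M t (x t)) I t :=
  hasDerivWithinAt_of_eq_const_add_integral (hM.clm_apply hx.1) hx.2 ht

end Volterra

section Companion

variable {a b : ℝ → ℝ}

noncomputable def companion (a b : ℝ → ℝ) (s : ℝ) : ℝ × ℝ →L[ℝ] ℝ × ℝ :=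
  .inl ℝ ℝ ℝ ∘L .snd ℝ ℝ ℝ - a s • (.inr ℝ ℝ ℝ ∘L .fst ℝ ℝ ℝ) - b s • (.inr ℝ ℝ ℝ ∘L .snd ℝ ℝ ℝ)

@[simp]
lemma companion_apply (s : ℝ) (z : ℝ × ℝ) :
    companion a b s z = (z.2, -(a s * z.1 + b s * z.2)) := by
  ext <;> simp [companion]; ring

lemma continuousOn_companion (ha : ContinuousOn a I) (hb : ContinuousOn b I) :
    ContinuousOn (companion a b) I :=
  (continuousOn_const.sub (ha.smul continuousOn_const)).sub (hb.smul continuousOn_const)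

lemma IsVolterraSolution.companion_eq (ha : ContinuousOn a I) (hb : ContinuousOn b I)
    {f : ℝ → ℝ} {z : ℝ → ℝ × ℝ} (hz : IsVolterraSolution (companion a b) (fun t => (0, f t)) z)
    {t : ℝ} (ht : t ∈ I) :
    (z t).1 = ∫ s in (0:ℝ)..t, (z s).2 ∧
      (z t).2 = f t - ∫ s in (0:ℝ)..t, (a s * (z s).1 + b s * (z s).2) := by
  have hi := ((continuousOn_companion ha hb).clm_apply hz.1).intervalIntegrable_zero_of_mem ht
  have h := hz.2 t ht
  have hfst := (ContinuousLinearMap.fst ℝ ℝ ℝ).intervalIntegral_comp_comm hi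
  have hsnd := (ContinuousLinearMap.snd ℝ ℝ ℝ).intervalIntegral_comp_comm hi
  simp only [ContinuousLinearMap.coe_fst', ContinuousLinearMap.coe_snd'] at hfst hsnd
  rw [h, Prod.fst_add, Prod.snd_add, ← hfst, ← hsnd]
  simp only [companion_apply, zero_add, intervalIntegral.integral_neg, sub_eq_add_neg, and_self]

lemma IsVolterraSolution.companion_hasDerivWithinAt (ha : ContinuousOn a I)
    (hb : ContinuousOn b I) {c : ℝ} {z : ℝ → ℝ × ℝ}
    (hz : IsVolterraSolution (companion a b) (fun _ => (0, c)) z) {t : ℝ} (ht : t ∈ I) :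
    HasDerivWithinAt (fun s => (z s).1) (z t).2 I t ∧
      HasDerivWithinAt (fun s => (z s).2) (-(a t * (z t).1 + b t * (z t).2)) I t := by
  have h := hz.hasDerivWithinAt _ (continuousOn_companion ha hb) ht
  exact ⟨by simpa using h.hasFDerivWithinAt.fst.hasDerivWithinAt,
    by simpa using h.hasFDerivWithinAt.snd.hasDerivWithinAt⟩

end Companion

section Y

variable (θ : C(I, ℝ))

lemma continuous_Yc' : Continuous (Yc' θ) :=
  continuous_const.add (θ.continuous.comp continuous_pr01)

lemma hasDerivAt_Yc (t : ℝ) : HasDerivAt (Yc θ) (Yc' θ t) t := by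
  have hθ := θ.continuous.comp continuous_pr01
  exact (((hasDerivAt_id t).neg.mul_const _).add
    (hθ.integral_hasStrictDerivAt 0 t).hasDerivAt).congr_deriv (by simp [Yc'])

lemma continuous_Yc : Continuous (Yc θ) :=
  continuous_iff_continuousAt.2 fun t => (hasDerivAt_Yc θ t).continuousAt

lemma Yc_apply_zero : Yc θ 0 = 0 := by simp [Yc]

lemma Yc_apply_one : Yc θ 1 = 0 := by simp [Yc]

lemma Yc_zero (t : ℝ) : Yc 0 t = 0 := by simp [Yc]

lemma Yc_eq_of_eq_sub {u v : ℝ → ℝ} {c : ℝ} (hθ : ∀ t : I, θ t = v t - c)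
    (hv : ContinuousOn v I) (hu : ∀ t ∈ I, u t = ∫ s in (0:ℝ)..t, v s) (hu1 : u 1 = 0)
    {t : ℝ} (ht : t ∈ I) : Yc θ t = u t ∧ Yc' θ t = v t := by
  have hint : ∀ t ∈ I, ∫ s in (0:ℝ)..t, θ (pr01 s) = u t - c * t := fun t ht => by
    rw [integral_congr (g := fun s => v s - c) fun s hs => by
        rw [pr01_of_mem (uIcc_zero_subset ht hs), hθ],
      integral_sub (hv.intervalIntegrable_zero_of_mem ht) intervalIntegrable_const,
      ← hu t ht, intervalIntegral.integral_const, smul_eq_mul, sub_zero, mul_comm]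
  constructor
  · rw [Yc, hint 1 (by simp), hint t ht, hu1]; ring
  · rw [Yc', hint 1 (by simp), pr01_of_mem ht, hθ, hu1]; ring

end Y

lemma isClosed_C0 : IsClosed (C0 : Set C(I, ℝ)) :=
  isClosed_eq (continuous_eval_const _) continuous_const

instance : CompleteSpace C0 := isClosed_C0.completeSpace_coe

lemma exists_C0_eq_sub {v : ℝ → ℝ} (hv : ContinuousOn v I) :
    ∃ θ : C0, ∀ t : I, (θ : C(I, ℝ)) t = v t - v 0 :=
  ⟨⟨⟨fun t => v t - v 0, hv.domRestrict.sub continuous_const⟩, sub_self _⟩, fun _ => rfl⟩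

lemma ContBdd3.continuousOn_comp {g : ℝ → ℝ → ℝ → ℝ} (hg : ContBdd3 g) {x y : ℝ → ℝ}
    (hx : ContinuousOn x I) (hy : ContinuousOn y I) :
    ContinuousOn (fun t => g t (x t) (y t)) I :=
  hg.1.comp (continuousOn_id.prodMk (hx.prodMk hy)) fun _ ht => ⟨ht, trivial⟩

lemma ContinuousLinearMap.exists_inverse_iff_bijective {E : Type*} [NormedAddCommGroup E]
    [NormedSpace ℝ E] [CompleteSpace E] (f : E →L[ℝ] E) :
    (∃ g : E →L[ℝ] E, g.comp f = .id ℝ E ∧ f.comp g = .id ℝ E) ↔ Function.Bijective f := by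
  rw [← f.isUnit_iff_bijective, isUnit_iff_exists]
  exact exists_congr fun g => and_comm

def DirichletUniqueness (a b : ℝ → ℝ) : Prop :=
  ∀ u u' u'' : ℝ → ℝ,
    (∀ t ∈ I, HasDerivWithinAt u (u' t) I t) →
    (∀ t ∈ I, HasDerivWithinAt u' (u'' t) I t) →
    ContinuousOn u'' I →
    (∀ t ∈ I, u'' t + b t * u' t + a t * u t = 0) →
    u 0 = 0 → u 1 = 0 → ∀ t ∈ I, u t = 0

lemma DirichletUniqueness.eq_zero {a b : ℝ → ℝ} (hU : DirichletUniqueness a b)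
    (ha : ContinuousOn a I) (hb : ContinuousOn b I) {u v : ℝ → ℝ}
    (hu : ∀ t ∈ I, HasDerivWithinAt u (v t) I t)
    (hv : ∀ t ∈ I, HasDerivWithinAt v (-(a t * u t + b t * v t)) I t)
    (h0 : u 0 = 0) (h1 : u 1 = 0) {t : ℝ} (ht : t ∈ I) : u t = 0 ∧ v t = 0 := by
  have hu_cont : ContinuousOn u I := fun s hs => (hu s hs).continuousWithinAt
  have hv_cont : ContinuousOn v I := fun s hs => (hv s hs).continuousWithinAt
  have hzero := hU u v _ hu hv ((ha.mul hu_cont).add (hb.mul hv_cont)).neg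
    (fun s _ => by ring) h0 h1
  have hu_deriv_zero : HasDerivWithinAt u 0 I t :=
    (hasDerivWithinAt_const t I 0).congr hzero (hzero t ht)
  exact ⟨hzero t ht, (uniqueDiffOn_Icc_zero_one t ht).eq_deriv _ (hu t ht) hu_deriv_zero⟩

lemma DirichletUniqueness.fst_one_ne_zero {a b : ℝ → ℝ} (hU : DirichletUniqueness a b)
    (ha : ContinuousOn a I) (hb : ContinuousOn b I) {z : ℝ → ℝ × ℝ}
    (hz : IsVolterraSolution (companion a b) (fun _ => (0, 1)) z) : (z 1).1 ≠ 0 := by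
  intro h1
  have hd := fun t (ht : t ∈ I) => hz.companion_hasDerivWithinAt ha hb ht
  have h0 := hz.companion_eq ha hb (left_mem_Icc.2 zero_le_one)
  have hz0 := (hU.eq_zero ha hb (fun t ht => (hd t ht).1) (fun t ht => (hd t ht).2)
    (by simpa using h0.1) h1 (left_mem_Icc.2 zero_le_one)).2
  simp [hz0] at h0

section Operator

variable {a b : ℝ → ℝ} {D : C0 →L[ℝ] C0}
  (hD : ∀ θ : C0, ∀ t : I, (D θ : C(I, ℝ)) t
    = (θ : C(I, ℝ)) t + ∫ s in (0:ℝ)..t, (a s * Yc θ s + b s * Yc' θ s))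
include hD

lemma apply_eq_of_integral_form {u v : ℝ → ℝ} (hv : ContinuousOn v I)
    (hu : ∀ t ∈ I, u t = ∫ s in (0:ℝ)..t, v s) (hu1 : u 1 = 0) {g : C(I, ℝ)}
    (hvg : ∀ t : I, v t = v 0 + g t - ∫ s in (0:ℝ)..t, (a s * u s + b s * v s))
    {θ : C0} (hθ : ∀ t : I, (θ : C(I, ℝ)) t = v t - v 0) : (D θ : C(I, ℝ)) = g := by
  ext t
  have hY := fun s (hs : s ∈ I) => Yc_eq_of_eq_sub θ hθ hv hu hu1 hs
  rw [hD, integral_congr (g := fun s => a s * u s + b s * v s) fun s hs => by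
    simp only [(hY s (uIcc_zero_subset t.2 hs)).1, (hY s (uIcc_zero_subset t.2 hs)).2], hθ]
  linarith [hvg t]

lemma dirichletUniqueness_of_injective (hinj : Function.Injective D) :
    DirichletUniqueness a b := by
  intro u u' u'' hu hu' hu''_cont hode hu0 hu1 t ht
  have hu'_cont : ContinuousOn u' I := fun s hs => (hu' s hs).continuousWithinAt
  have hu_int : ∀ t ∈ I, u t = ∫ s in (0:ℝ)..t, u' s := fun t ht => by
    rw [integral_eq_sub_of_hasDerivWithinAt_Icc hu hu'_cont ht, hu0, sub_zero]
  obtain ⟨θ, hθ⟩ := exists_C0_eq_sub hu'_cont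
  have hDθ : D θ = 0 := Subtype.ext <| apply_eq_of_integral_form hD hu'_cont hu_int hu1
    (g := 0) (fun t => ?_) hθ
  · rw [← map_zero D] at hDθ
    rw [← (Yc_eq_of_eq_sub θ hθ hu'_cont hu_int hu1 ht).1, hinj hDθ]
    exact Yc_zero t
  · rw [integral_congr (g := fun s => -u'' s) fun s hs => by
        linarith [hode s (uIcc_zero_subset t.2 hs)],
      intervalIntegral.integral_neg, integral_eq_sub_of_hasDerivWithinAt_Icc hu' hu''_cont t.2]
    simp

lemma injective_of_dirichletUniqueness (ha : ContinuousOn a I) (hb : ContinuousOn b I)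
    (hU : DirichletUniqueness a b) : Function.Injective D := by
  rw [injective_iff_map_eq_zero]
  intro θ hθ
  let H s := a s * Yc θ s + b s * Yc' θ s
  have hH : ContinuousOn H I :=
    (ha.mul (continuous_Yc θ).continuousOn).add (hb.mul (continuous_Yc' θ).continuousOn)
  have hθH : ∀ t : I, (θ : C(I, ℝ)) t = -∫ s in (0:ℝ)..t, H s := fun t => by
    have := hD θ t
    rw [hθ] at this
    simp only [ZeroMemClass.coe_zero, ContinuousMap.zero_apply] at this
    linarith
  have hY' : ∀ t ∈ I,
      Yc' θ t = -(∫ s in (0:ℝ)..1, (θ : C(I, ℝ)) (pr01 s)) + ∫ s in (0:ℝ)..t, -H s := fun t ht => by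
    rw [Yc', pr01_of_mem ht, hθH, intervalIntegral.integral_neg]
  have hY_zero := fun t (ht : t ∈ I) => hU.eq_zero ha hb
    (fun t _ => (hasDerivAt_Yc θ t).hasDerivWithinAt)
    (fun t ht => hasDerivWithinAt_of_eq_const_add_integral hH.neg hY' ht)
    (Yc_apply_zero θ) (Yc_apply_one θ) ht
  ext t
  rw [hθH, integral_congr (g := 0) fun s hs => by
    simp [H, hY_zero s (uIcc_zero_subset t.2 hs)]]
  simp

lemma surjective_of_dirichletUniqueness (ha : ContinuousOn a I) (hb : ContinuousOn b I)
    (hU : DirichletUniqueness a b) : Function.Surjective D := by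
  intro g
  have hM := continuousOn_companion ha hb
  have hg : ContinuousOn (fun t => (g : C(I, ℝ)) (pr01 t)) I :=
    ((g : C(I, ℝ)).continuous.comp continuous_pr01).continuousOn
  obtain ⟨z₀, hz₀⟩ :=
    exists_isVolterraSolution _ hM ((continuousOn_const (c := (0 : ℝ))).prodMk hg)
  obtain ⟨zₕ, hzₕ⟩ := exists_isVolterraSolution (companion a b) hM
    (continuousOn_const (c := ((0 : ℝ), (1 : ℝ))))
  have hzₕ1 := hU.fst_one_ne_zero ha hb hzₕ
  set c := -(z₀ 1).1 / (zₕ 1).1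
  have hz : IsVolterraSolution (companion a b) (fun t => (0, (g : C(I, ℝ)) (pr01 t) + c))
      (z₀ + c • zₕ) := by
    convert hz₀.add_smul _ hM hzₕ c using 1
    ext t <;> simp
  have hz1 : ((z₀ + c • zₕ) 1).1 = 0 := by
    simp only [Pi.add_apply, Pi.smul_apply, Prod.fst_add, Prod.smul_fst, smul_eq_mul, c]
    field_simp
    ring
  obtain ⟨θ, hθ⟩ := exists_C0_eq_sub hz.1.snd
  refine ⟨θ, Subtype.ext <| apply_eq_of_integral_form hD hz.1.snd
    (fun t ht => (hz.companion_eq ha hb ht).1) hz1 (fun t => ?_) hθ⟩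
  have h0 := (hz.companion_eq ha hb (left_mem_Icc.2 zero_le_one)).2
  have hg0 : (g : C(I, ℝ)) (pr01 0) = 0 := by rw [pr01_of_mem (by simp)]; exact g.2
  rw [(hz.companion_eq ha hb t.2).2, h0, hg0, pr01_of_mem t.2]
  simp only [integral_same, sub_zero, zero_add, add_comm]

theorem bijective_iff_dirichletUniqueness (ha : ContinuousOn a I) (hb : ContinuousOn b I) :
    Function.Bijective D ↔ DirichletUniqueness a b :=
  ⟨fun h => dirichletUniqueness_of_injective hD h.1, fun hU =>
    ⟨injective_of_dirichletUniqueness hD ha hb hU, surjective_of_dirichletUniqueness hD ha hb hU⟩⟩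

end Operator

/-- the operator `DT(ω)` is a Banach space isomorphism of `C₀` if and
only if the linearized boundary value problem has only the zero solution. -/
theorem stmt11 (fx fy : ℝ → ℝ → ℝ → ℝ)
    (hfx : ContBdd3 fx) (hfy : ContBdd3 fy)
    (ω : C(Set.Icc (0:ℝ) 1, ℝ))
    (Dop : C0 →L[ℝ] C0)
    (hD : ∀ θ : C0, ∀ t : Set.Icc (0:ℝ) 1,
      (Dop θ : C(Set.Icc (0:ℝ) 1, ℝ)) t
        = (θ : C(Set.Icc (0:ℝ) 1, ℝ)) t
          + ∫ s in (0:ℝ)..(t:ℝ),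
              (fx s (Yc ω s) (Yc' ω s) * Yc (θ : C(Set.Icc (0:ℝ) 1, ℝ)) s
                + fy s (Yc ω s) (Yc' ω s) * Yc' (θ : C(Set.Icc (0:ℝ) 1, ℝ)) s)) :
    (∃ B : C0 →L[ℝ] C0,
        B.comp Dop = ContinuousLinearMap.id ℝ C0 ∧
        Dop.comp B = ContinuousLinearMap.id ℝ C0)
    ↔ (∀ u u' u'' : ℝ → ℝ,
        (∀ t ∈ Set.Icc (0:ℝ) 1, HasDerivWithinAt u (u' t) (Set.Icc 0 1) t) →
        (∀ t ∈ Set.Icc (0:ℝ) 1, HasDerivWithinAt u' (u'' t) (Set.Icc 0 1) t) →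
        ContinuousOn u'' (Set.Icc 0 1) →
        (∀ t ∈ Set.Icc (0:ℝ) 1,
          u'' t + fy t (Yc ω t) (Yc' ω t) * u' t + fx t (Yc ω t) (Yc' ω t) * u t = 0) →
        u 0 = 0 → u 1 = 0 → ∀ t ∈ Set.Icc (0:ℝ) 1, u t = 0) := by
  have hY := (continuous_Yc ω).continuousOn (s := I)
  have hY' := (continuous_Yc' ω).continuousOn (s := I)
  exact (ContinuousLinearMap.exists_inverse_iff_bijective (E := C0) Dop).trans <|
    bijective_iff_dirichletUniqueness hD (hfx.continuousOn_comp hY hY')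
      (hfy.continuousOn_comp hY hY')
end
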